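/- arXiv:2101.09367 — 3 statements merged into one kernel-verified Lean document; each statement's English description precedes it below -/
import Mathlib

section
/- Let X be a nonempty set of norms on V such that: (1) e^a η ∈ X for all η ∈ X and a ∈ ℝ; (2) any two elements of X are at finite Goldman–Iwahori distance; (3) X is a join-semilattice: any nonempty subset F ⊆ X bounded above in X has a least upper bound in X. Then the family of closed balls of the Goldman–Iwahori metric on X satisfies the Helly property: any family of pairwise intersecting closed balls has nonempty total intersection. -/
def IsNorm (𝕂 : Type*) [NormedField 𝕂] {V : Type*} [AddCommGroup V] [Module 𝕂 V]
    (η : V → ℝ) : Prop :=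
  (∀ v, 0 ≤ η v) ∧ (∀ v, η v = 0 ↔ v = 0) ∧
    (∀ (α : 𝕂) (v : V), η (α • v) = ‖α‖ * η v) ∧ ∀ u v, η (u + v) ≤ η u + η v

noncomputable def GIdist {V : Type*} [Zero V] (η η' : V → ℝ) : ℝ :=
  ⨆ v : {v : V // v ≠ 0}, |Real.log (η v.1 / η' v.1)|

/-! On norms in `X`, the closed Goldman–Iwahori ball of radius `ρ` about `η` is the order interval
`[e^{-ρ} η, e^{ρ} η]`. Pairwise intersection of the balls about `c i` therefore says
`e^{-r i} c i ≤ e^{r j} c j` for all `i, j`, so the join of the lower endpoints `e^{-r i} c i`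
exists in `X` and lies in every interval, hence in every ball. -/

open Real Set

theorem Real.abs_log_div_le_iff {x y ρ : ℝ} (hx : 0 < x) (hy : 0 < y) :
    |log (x / y)| ≤ ρ ↔ y ∈ Icc (exp (-ρ) * x) (exp ρ * x) := by
  rw [← abs_neg, ← log_inv, inv_div, abs_le, mem_Icc, le_log_iff_exp_le (div_pos hy hx),
    log_le_iff_le_exp (div_pos hy hx), le_div_iff₀ hx, div_le_iff₀ hx]

theorem GIdist_le_iff_forall {V : Type*} [Zero V] {η θ : V → ℝ} {ρ : ℝ}
    (hbdd : BddAbove (range fun v : {v : V // v ≠ 0} => |log (η v / θ v)|)) (hρ : 0 ≤ ρ) :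
    GIdist η θ ≤ ρ ↔ ∀ v ≠ 0, |log (η v / θ v)| ≤ ρ :=
  ⟨fun h v hv => (le_ciSup hbdd ⟨v, hv⟩).trans h, fun h => Real.iSup_le (fun v => h v v.2) hρ⟩

namespace IsNorm

variable {𝕂 V : Type*} [NormedField 𝕂] [AddCommGroup V] [Module 𝕂 V] {η θ : V → ℝ}

theorem apply_zero (hη : IsNorm 𝕂 η) : η 0 = 0 :=
  (hη.2.1 0).2 rfl

theorem pos (hη : IsNorm 𝕂 η) {v : V} (hv : v ≠ 0) : 0 < η v :=
  (hη.1 v).lt_of_ne fun h => hv ((hη.2.1 v).1 h.symm)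

theorem GIdist_le_iff (hη : IsNorm 𝕂 η) (hθ : IsNorm 𝕂 θ)
    (hfin : ∃ a, ∀ v, θ v ∈ Icc (exp (-a) * η v) (exp a * η v)) {ρ : ℝ} (hρ : 0 ≤ ρ) :
    GIdist η θ ≤ ρ ↔ θ ∈ Icc (exp (-ρ) • η) (exp ρ • η) := by
  have hball : ∀ ρ, ∀ v ≠ 0, |log (η v / θ v)| ≤ ρ ↔ θ v ∈ Icc (exp (-ρ) * η v) (exp ρ * η v) :=
    fun _ _ hv => abs_log_div_le_iff (hη.pos hv) (hθ.pos hv)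
  obtain ⟨a, ha⟩ := hfin
  have hbdd : BddAbove (range fun v : {v : V // v ≠ 0} => |log (η v / θ v)|) := by
    refine ⟨a, ?_⟩
    rintro _ ⟨v, rfl⟩
    exact (hball a v v.2).2 (ha v)
  have hIcc : θ ∈ Icc (exp (-ρ) • η) (exp ρ • η) ↔
      ∀ v ≠ 0, θ v ∈ Icc (exp (-ρ) * η v) (exp ρ * η v) := by
    refine ⟨fun h v _ => ⟨h.1 v, h.2 v⟩, fun h => ?_⟩
    have h' : ∀ v, θ v ∈ Icc (exp (-ρ) * η v) (exp ρ * η v) := by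
      intro v
      rcases eq_or_ne v 0 with rfl | hv
      · simp [hη.apply_zero, hθ.apply_zero]
      · exact h v hv
    exact ⟨fun v => (h' v).1, fun v => (h' v).2⟩
  rw [GIdist_le_iff_forall hbdd hρ, hIcc]
  exact forall₂_congr (hball ρ)

end IsNorm

theorem exists_forall_mem_Icc {α : Type*} [Preorder α] {X : Set α}
    (hjoin : ∀ F ⊆ X, F.Nonempty → (∃ b ∈ X, ∀ x ∈ F, x ≤ b) →
      ∃ j ∈ X, (∀ x ∈ F, x ≤ j) ∧ ∀ b ∈ X, (∀ x ∈ F, x ≤ b) → j ≤ b)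
    {ι : Type*} [Nonempty ι] {a b : ι → α} (ha : ∀ i, a i ∈ X) (hb : ∀ i, b i ∈ X)
    (hab : ∀ i j, a i ≤ b j) : ∃ x ∈ X, ∀ i, x ∈ Icc (a i) (b i) := by
  have hub : ∀ j, ∀ x ∈ range a, x ≤ b j := by
    rintro j _ ⟨i, rfl⟩
    exact hab i j
  obtain ⟨x, hxX, hax, hxb⟩ := hjoin (range a) (range_subset_iff.2 ha) (range_nonempty a)
    ⟨b (Classical.arbitrary ι), hb _, hub _⟩
  exact ⟨x, hxX, fun i => ⟨hax _ (mem_range_self i), hxb _ (hb i) (hub i)⟩⟩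

/-- Proposition 2.1: if a nonempty set `X` of norms is closed under scaling,
has pairwise finite Goldman–Iwahori distances, and is a join-semilattice for the
pointwise order, then closed balls of the Goldman–Iwahori metric on `X` satisfy
the Helly property. -/
theorem goldmanIwahori_helly
    {𝕂 V : Type*} [NormedField 𝕂] [AddCommGroup V] [Module 𝕂 V]
    (X : Set (V → ℝ)) (hne : X.Nonempty) (hnorm : ∀ η ∈ X, IsNorm 𝕂 η)
    (hscale : ∀ η ∈ X, ∀ a : ℝ, (fun v => Real.exp a * η v) ∈ X)
    (hfin : ∀ η ∈ X, ∀ η' ∈ X, ∃ a : ℝ,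
      ∀ v, Real.exp (-a) * η' v ≤ η v ∧ η v ≤ Real.exp a * η' v)
    (hjoin : ∀ F ⊆ X, F.Nonempty → (∃ η ∈ X, ∀ θ ∈ F, ∀ v, θ v ≤ η v) →
      ∃ j ∈ X, (∀ θ ∈ F, ∀ v, θ v ≤ j v) ∧
        ∀ η ∈ X, (∀ θ ∈ F, ∀ v, θ v ≤ η v) → ∀ v, j v ≤ η v)
    {ι : Type*} (c : ι → V → ℝ) (hc : ∀ i, c i ∈ X) (r : ι → ℝ) (hr : ∀ i, 0 ≤ r i)
    (hpair : ∀ i j, ∃ θ ∈ X, GIdist (c i) θ ≤ r i ∧ GIdist (c j) θ ≤ r j) :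
    ∃ θ ∈ X, ∀ i, GIdist (c i) θ ≤ r i := by
  rcases isEmpty_or_nonempty ι with hι | hι
  · obtain ⟨θ, hθ⟩ := hne
    exact ⟨θ, hθ, isEmptyElim⟩
  have hball : ∀ i, ∀ θ ∈ X,
      GIdist (c i) θ ≤ r i ↔ θ ∈ Icc (exp (-r i) • c i) (exp (r i) • c i) := fun i θ hθ =>
    (hnorm _ (hc i)).GIdist_le_iff (hnorm θ hθ) (hfin θ hθ (c i) (hc i)) (hr i)
  obtain ⟨θ, hθX, hθ⟩ := exists_forall_mem_Icc hjoin (a := fun i => exp (-r i) • c i)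
    (b := fun i => exp (r i) • c i) (fun i => hscale _ (hc i) _) (fun i => hscale _ (hc i) _)
    fun i j => by
      obtain ⟨θ, hθX, hi, hj⟩ := hpair i j
      exact ((hball i θ hθX).1 hi).1.trans ((hball j θ hθX).1 hj).2
  exact ⟨θ, hθX, fun i => (hball i θ hθX).2 (hθ i)⟩
end

section
/- Fix a basis v₁,…,vₙ of V over a non-Archimedean valued field 𝕂. For m ∈ ℝⁿ define the diagonalizable ultrametric norm η_m(Σ xᵢvᵢ) = max_i e^{mᵢ}|xᵢ|. Then the Goldman–Iwahori distance satisfies d(η_m, η_{m'}) = ‖m − m'‖_∞ for all m, m' ∈ ℝⁿ. -/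
open Real

section GIdist

variable {V : Type*} [Zero V] {η η' : V → ℝ} {C : ℝ}

theorem GIdist_le (hC : 0 ≤ C) (h : ∀ v, v ≠ 0 → |log (η v / η' v)| ≤ C) :
    GIdist η η' ≤ C :=
  Real.iSup_le (fun v => h v.1 v.2) hC

theorem abs_log_div_le_GIdist (h : ∀ v, v ≠ 0 → |log (η v / η' v)| ≤ C) {v : V} (hv : v ≠ 0) :
    |log (η v / η' v)| ≤ GIdist η η' :=
  le_ciSup (f := fun v : {v : V // v ≠ 0} => |log (η v.1 / η' v.1)|)
    ⟨C, Set.forall_mem_range.2 fun v => h v.1 v.2⟩ ⟨v, hv⟩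

end GIdist

theorem abs_log_div_le_of_le_exp_mul {x y C : ℝ} (hx : 0 < x) (hy : 0 < y)
    (hxy : x ≤ exp C * y) (hyx : y ≤ exp C * x) : |log (x / y)| ≤ C := by
  have hlog : ∀ {a b : ℝ}, 0 < a → 0 < b → a ≤ exp C * b → log a ≤ C + log b :=
    fun ha hb hab => by
      simpa only [log_mul (exp_pos C).ne' hb.ne', log_exp] using log_le_log ha hab
  rw [log_div hx.ne' hy.ne', abs_sub_le_iff]
  constructor <;> linarith [hlog hx hy hxy, hlog hy hx hyx]

noncomputable def diagNorm {ι 𝕂 V : Type*} [SeminormedRing 𝕂] [AddCommMonoid V] [Module 𝕂 V]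
    (b : Module.Basis ι 𝕂 V) (m : ι → ℝ) (v : V) : ℝ :=
  ⨆ i, exp (m i) * ‖b.repr v i‖

section diagNorm

variable {ι 𝕂 V : Type*} [AddCommMonoid V]

theorem diagNorm_nonneg [SeminormedRing 𝕂] [Module 𝕂 V] (b : Module.Basis ι 𝕂 V)
    (m : ι → ℝ) (v : V) : 0 ≤ diagNorm b m v :=
  Real.iSup_nonneg fun _ => by positivity

theorem le_diagNorm [Finite ι] [SeminormedRing 𝕂] [Module 𝕂 V] (b : Module.Basis ι 𝕂 V)
    (m : ι → ℝ) (v : V) (i : ι) : exp (m i) * ‖b.repr v i‖ ≤ diagNorm b m v :=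
  le_ciSup (f := fun i => exp (m i) * ‖b.repr v i‖) (Set.finite_range _).bddAbove i

theorem diagNorm_le_exp_mul [Fintype ι] [SeminormedRing 𝕂] [Module 𝕂 V] (b : Module.Basis ι 𝕂 V)
    (m m' : ι → ℝ) (v : V) : diagNorm b m v ≤ exp ‖m - m'‖ * diagNorm b m' v := by
  refine Real.iSup_le (fun i => ?_) (by positivity [diagNorm_nonneg b m' v])
  have hexp : exp (m i - m' i) ≤ exp ‖m - m'‖ :=
    exp_le_exp.2 ((le_abs_self _).trans (norm_le_pi_norm (m - m') i))
  calc exp (m i) * ‖b.repr v i‖ = exp (m i - m' i) * (exp (m' i) * ‖b.repr v i‖) := by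
        rw [← mul_assoc, ← exp_add, sub_add_cancel]
    _ ≤ exp ‖m - m'‖ * diagNorm b m' v :=
        mul_le_mul hexp (le_diagNorm b m' v i) (by positivity) (exp_pos _).le

theorem diagNorm_pos [Finite ι] [NormedRing 𝕂] [Module 𝕂 V] (b : Module.Basis ι 𝕂 V)
    (m : ι → ℝ) {v : V} (hv : v ≠ 0) : 0 < diagNorm b m v := by
  obtain ⟨i, hi⟩ : ∃ i, b.repr v i ≠ 0 := by
    by_contra! h
    exact hv (b.repr.map_eq_zero_iff.1 (Finsupp.ext h))
  exact (mul_pos (exp_pos _) (norm_pos_iff.2 hi)).trans_le (le_diagNorm b m v i)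

theorem diagNorm_basis [Finite ι] [NormedRing 𝕂] [NormOneClass 𝕂] [Module 𝕂 V]
    (b : Module.Basis ι 𝕂 V) (m : ι → ℝ) (i : ι) : diagNorm b m (b i) = exp (m i) := by
  refine le_antisymm (Real.iSup_le (fun j => ?_) (exp_pos _).le) ?_
  · rcases eq_or_ne i j with rfl | hij
    · simp
    · simp [hij, (exp_pos _).le]
  · simpa using le_diagNorm b m (b i) i

theorem abs_log_div_diagNorm_le [Fintype ι] [NormedRing 𝕂] [Module 𝕂 V] (b : Module.Basis ι 𝕂 V)
    (m m' : ι → ℝ) {v : V} (hv : v ≠ 0) :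
    |log (diagNorm b m v / diagNorm b m' v)| ≤ ‖m - m'‖ :=
  abs_log_div_le_of_le_exp_mul (diagNorm_pos b m hv) (diagNorm_pos b m' hv)
    (diagNorm_le_exp_mul b m m' v) (norm_sub_rev m m' ▸ diagNorm_le_exp_mul b m' m v)

end diagNorm

theorem GIdist_diagonalizable_norms_general
    {𝕂 : Type*} [NormedField 𝕂]
    {V : Type*} [AddCommGroup V] [Module 𝕂 V] {n : ℕ}
    (b : Module.Basis (Fin n) 𝕂 V) (m m' : Fin n → ℝ) :
    GIdist (fun v => ⨆ i, Real.exp (m i) * ‖b.repr v i‖)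
      (fun v => ⨆ i, Real.exp (m' i) * ‖b.repr v i‖) = ‖m - m'‖ := by
  change GIdist (diagNorm b m) (diagNorm b m') = ‖m - m'‖
  have hbound := fun v => abs_log_div_diagNorm_le (v := v) b m m'
  refine le_antisymm (GIdist_le (norm_nonneg _) hbound) ?_
  refine (pi_norm_le_iff_of_nonneg (Real.iSup_nonneg fun _ => abs_nonneg _)).2 fun i => ?_
  calc ‖(m - m') i‖ = |log (diagNorm b m (b i) / diagNorm b m' (b i))| := by
        rw [diagNorm_basis, diagNorm_basis, ← exp_sub, log_exp, Pi.sub_apply, Real.norm_eq_abs]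
    _ ≤ GIdist (diagNorm b m) (diagNorm b m') := abs_log_div_le_GIdist hbound (b.ne_zero i)

/-- For the diagonalizable ultrametric norms `η_m (Σ xᵢ vᵢ) = max_i e^{m i} |xᵢ|`
associated to a fixed basis, the Goldman–Iwahori distance satisfies
`d(η_m, η_{m'}) = ‖m - m'‖_∞`. -/
theorem GIdist_diagonalizable_norms
    {𝕂 : Type*} [NormedField 𝕂] [IsUltrametricDist 𝕂]
    {V : Type*} [AddCommGroup V] [Module 𝕂 V] {n : ℕ}
    (b : Module.Basis (Fin n) 𝕂 V) (m m' : Fin n → ℝ) :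
    GIdist (fun v => ⨆ i, Real.exp (m i) * ‖b.repr v i‖)
      (fun v => ⨆ i, Real.exp (m' i) * ‖b.repr v i‖) = ‖m - m'‖ :=
  GIdist_diagonalizable_norms_general b m m'
end

section
/- Let X be a metric space whose closed balls satisfy the Helly property, and let a finite group F act on X by isometries with nonempty fixed point set X^F; if X is injective, then X^F (with the induced metric) is injective. -/
/-- A metric space is injective (hyperconvex) if for any family of points and
radii with `dist x y ≤ r x + r y`, the corresponding closed balls have a common
point. -/
def IsInjectiveMetricSpace (X : Type*) [MetricSpace X] : Prop :=
  ∀ (s : Set X) (r : X → ℝ), (∀ x ∈ s, ∀ y ∈ s, dist x y ≤ r x + r y) →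
    ∃ z, ∀ x ∈ s, dist x z ≤ r x

/-- Helly property for a set of (center, radius) pairs, allowing several radii
per center. -/
lemma helly_pairs {X : Type*} [MetricSpace X] (hX : IsInjectiveMetricSpace X)
    (T : Set (X × ℝ)) (hT : ∀ p ∈ T, ∀ q ∈ T, dist p.1 q.1 ≤ p.2 + q.2) :
    ∃ z, ∀ p ∈ T, dist p.1 z ≤ p.2 := by
  have hnonneg : ∀ p ∈ T, 0 ≤ p.2 := by
    intro p hp
    have := hT p hp p hp
    simp only [dist_self] at this
    linarith
  set rf : X → ℝ := fun x => sInf {ρ | (x, ρ) ∈ T} with hrf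
  have hbdd : ∀ x : X, BddBelow {ρ | (x, ρ) ∈ T} :=
    fun x => ⟨0, fun ρ hρ => hnonneg _ hρ⟩
  have hle : ∀ p ∈ T, rf p.1 ≤ p.2 := fun p hp => csInf_le (hbdd _) hp
  have hpair : ∀ x ∈ Prod.fst '' T, ∀ y ∈ Prod.fst '' T,
      dist x y ≤ rf x + rf y := by
    rintro x ⟨px, hpx, rfl⟩ y ⟨py, hpy, rfl⟩
    have h1 : dist px.1 py.1 - rf py.1 ≤ rf px.1 := by
      apply le_csInf ⟨px.2, hpx⟩
      intro ρ hρ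
      have h2 : dist px.1 py.1 - ρ ≤ rf py.1 := by
        apply le_csInf ⟨py.2, hpy⟩
        intro ρ' hρ'
        have := hT (px.1, ρ) hρ (py.1, ρ') hρ'
        simp only at this
        linarith
      linarith
    linarith
  obtain ⟨z, hz⟩ := hX (Prod.fst '' T) rf hpair
  exact ⟨z, fun p hp => le_trans (hz p.1 ⟨p, hp, rfl⟩) (hle p hp)⟩

/-- The descending sequence of admissible sets in Lang's argument. -/
def langSeq {X : Type*} [MetricSpace X] (A0 : Set X) : ℕ → Set X
  | 0 => A0
  | n + 1 => langSeq A0 n ∩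
      {z | ∀ a ∈ langSeq A0 n, dist a z ≤ Metric.diam (langSeq A0 n) / 2}

lemma langSeq_succ_subset {X : Type*} [MetricSpace X] (A0 : Set X) (n : ℕ) :
    langSeq A0 (n + 1) ⊆ langSeq A0 n := Set.inter_subset_left

lemma langSeq_antitone {X : Type*} [MetricSpace X] (A0 : Set X) :
    Antitone (langSeq A0) :=
  antitone_nat_of_succ_le (langSeq_succ_subset A0)

lemma langSeq_subset_zero {X : Type*} [MetricSpace X] (A0 : Set X) (n : ℕ) :
    langSeq A0 n ⊆ A0 := langSeq_antitone A0 (Nat.zero_le n)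

/-- Lang's result: the fixed point set of a finite group acting by isometries on
an injective metric space is injective (assuming it is nonempty). -/
theorem fixedPoints_injective
    {X : Type*} [MetricSpace X] {F : Type*} [Group F] [Finite F] [MulAction F X]
    (hiso : ∀ f : F, Isometry (fun x : X => f • x))
    (hX : IsInjectiveMetricSpace X)
    (hne : Nonempty {x : X // ∀ f : F, f • x = x}) :
    IsInjectiveMetricSpace {x : X // ∀ f : F, f • x = x} := by
  intro s r hr
  rcases s.eq_empty_or_nonempty with hse | ⟨x₀, hx₀⟩
  · obtain ⟨y⟩ := hne
    exact ⟨y, by simp [hse]⟩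
  -- the base admissible set in X
  set A0 : Set X := {z | ∀ x ∈ s, dist (x : X) z ≤ r x} with hA0
  set A : ℕ → Set X := langSeq A0 with hA
  have hdist_smul : ∀ (f : F) (a b : X), dist (f • a) (f • b) = dist a b :=
    fun f a b => (hiso f).dist_eq a b
  -- boundedness
  have hbdd0 : Bornology.IsBounded A0 := by
    apply Bornology.IsBounded.subset (Metric.isBounded_closedBall
      (x := (x₀ : X)) (r := r x₀))
    intro z hz
    simp only [Metric.mem_closedBall]
    rw [dist_comm]
    exact hz x₀ hx₀
  have hbdd : ∀ n, Bornology.IsBounded (A n) :=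
    fun n => hbdd0.subset (langSeq_subset_zero A0 n)
  -- invariance of each A n
  have hinv : ∀ n, ∀ f : F, ∀ w ∈ A n, f • w ∈ A n := by
    intro n
    induction n with
    | zero =>
      intro f w hw x hx
      have hx' : f • (x : X) = (x : X) := x.2 f
      calc dist (x : X) (f • w) = dist (f • (x : X)) (f • w) := by rw [hx']
        _ = dist (x : X) w := hdist_smul f _ _
        _ ≤ r x := hw x hx
    | succ n ih =>
      intro f w hw
      refine ⟨ih f w hw.1, fun a ha => ?_⟩
      have ha' : f⁻¹ • a ∈ A n := ih f⁻¹ a ha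
      calc dist a (f • w) = dist (f • (f⁻¹ • a)) (f • w) := by
            rw [smul_inv_smul]
        _ = dist (f⁻¹ • a) w := hdist_smul f _ _
        _ ≤ Metric.diam (A n) / 2 := hw.2 _ ha'
  -- halving of diameters
  have hhalf : ∀ n, Metric.diam (A (n + 1)) ≤ Metric.diam (A n) / 2 := by
    intro n
    apply Metric.diam_le_of_forall_dist_le (by positivity)
    intro z₁ h₁ z₂ h₂
    rw [dist_comm]
    exact h₁.2 z₂ h₂.1
  have hgeo : ∀ n, Metric.diam (A n) ≤ Metric.diam A0 * (1 / 2) ^ n := by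
    intro n
    induction n with
    | zero => simp [hA]; rfl
    | succ n ih =>
      calc Metric.diam (A (n + 1)) ≤ Metric.diam (A n) / 2 := hhalf n
        _ ≤ Metric.diam A0 * (1 / 2) ^ n / 2 := by linarith
        _ = Metric.diam A0 * (1 / 2) ^ (n + 1) := by ring
  -- the big Helly family
  set T : Set (X × ℝ) :=
    {p | (∃ x ∈ s, p = ((x : X), r x)) ∨
      ∃ n, p.1 ∈ A n ∧ p.2 = Metric.diam (A n) / 2} with hT
  -- key pairwise estimate between levels
  have hkey : ∀ m m', m ≤ m' → ∀ a ∈ A m, ∀ a' ∈ A m',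
      dist a a' ≤ Metric.diam (A m) / 2 + Metric.diam (A m') / 2 := by
    intro m m' hmm' a ha a' ha'
    rcases eq_or_lt_of_le hmm' with rfl | hlt
    · have := Metric.dist_le_diam_of_mem (hbdd m) ha ha'
      linarith
    · have ha'' : a' ∈ A (m + 1) := langSeq_antitone A0 hlt ha'
      have h1 : dist a a' ≤ Metric.diam (A m) / 2 := ha''.2 a ha
      have h2 : (0 : ℝ) ≤ Metric.diam (A m') := Metric.diam_nonneg
      linarith
  have hTpair : ∀ p ∈ T, ∀ q ∈ T, dist p.1 q.1 ≤ p.2 + q.2 := by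
    rintro p hp q hq
    rcases hp with ⟨x, hx, rfl⟩ | ⟨m, hpm, hp2⟩ <;>
      rcases hq with ⟨y, hy, rfl⟩ | ⟨m', hqm', hq2⟩
    · have := hr x hx y hy
      rwa [Subtype.dist_eq] at this
    · have h1 : dist (x : X) q.1 ≤ r x := (langSeq_subset_zero A0 m' hqm') x hx
      have h2 : (0 : ℝ) ≤ Metric.diam (A m') := Metric.diam_nonneg
      rw [hq2]; simp only
      linarith
    · have h1 : dist (y : X) p.1 ≤ r y := (langSeq_subset_zero A0 m hpm) y hy
      have h2 : (0 : ℝ) ≤ Metric.diam (A m) := Metric.diam_nonneg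
      rw [hp2, dist_comm]; simp only
      linarith
    · rw [hp2, hq2]
      rcases le_total m m' with h | h
      · exact hkey m m' h p.1 hpm q.1 hqm'
      · rw [dist_comm]
        have := hkey m' m h q.1 hqm' p.1 hpm
        linarith
  obtain ⟨z, hz⟩ := helly_pairs hX T hTpair
  -- z lies in every A n
  have hzA : ∀ n, z ∈ A n := by
    intro n
    induction n with
    | zero => exact fun x hx => hz ((x : X), r x) (Or.inl ⟨x, hx, rfl⟩)
    | succ n ih =>
      exact ⟨ih, fun a ha => hz (a, Metric.diam (A n) / 2) (Or.inr ⟨n, ha, rfl⟩)⟩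
  -- z is fixed
  have hfix : ∀ f : F, f • z = z := by
    intro f
    have hb : ∀ n, dist (f • z) z ≤ Metric.diam A0 * (1 / 2) ^ n := by
      intro n
      exact le_trans (Metric.dist_le_diam_of_mem (hbdd n)
        (hinv n f z (hzA n)) (hzA n)) (hgeo n)
    have hlim : Filter.Tendsto (fun n : ℕ => Metric.diam A0 * (1 / 2 : ℝ) ^ n)
        Filter.atTop (nhds 0) := by
      have := tendsto_pow_atTop_nhds_zero_of_lt_one
        (by norm_num : (0 : ℝ) ≤ 1 / 2) (by norm_num : (1 / 2 : ℝ) < 1)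
      simpa using this.const_mul (Metric.diam A0)
    have h0 : dist (f • z) z ≤ 0 := ge_of_tendsto' hlim hb
    exact dist_le_zero.mp h0
  refine ⟨⟨z, hfix⟩, fun x hx => ?_⟩
  rw [Subtype.dist_eq]
  exact hzA 0 x hx
end
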